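/- Let α, β, γ, ε be real numbers satisfying the Fuchsian condition 1 + α + β = γ + 2ε, and suppose γ > −1. Define w(z) = Σ_{k=0}^∞ [ (α/2)_k (β/2)_k / ( ((1+γ)/2)_k k! ) ] z^(2k), where (x)_k is the ascending Pochhammer symbol (the series converges for |z| < 1). Then for every z ∈ (0,1), w satisfies the general Heun equation with a = −1, q = 0, δ = ε: w''(z) + ( γ/z + ε/(z−1) + ε/(z+1) ) w'(z) + αβ z/( z(z−1)(z+1) ) w(z) = 0. -/

import Mathlib

/-!
Substituting `x = z²`, one has `w(z) = F(z²)` for Gauss's function `F = ₂F₁(a, b; c; ·)` with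
`a = α/2`, `b = β/2`, `c = (1+γ)/2`, and `w' = 2zF'`, `w'' = 2F' + 4z²F''`. Since
`ε/(z-1) + ε/(z+1) = 2εz/(x-1)` and, by the Fuchsian condition, `2ε = 1 + α + β - γ`, the Heun
expression times `(x-1)/4` is `-(x(1-x)F'' + (c - (a+b+1)x)F' - abF)`, which vanishes by Gauss's
hypergeometric equation. That equation holds on the unit disc because the coefficient of `xⁿ`
in it is `(n+1)(n+c)dₙ₊₁ - (n+a)(n+b)dₙ`, zero by the recursion of the Pochhammer symbols;
`c > 0` keeps the denominators `(c)ₙ` nonzero and the radius of convergence at least `1`.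
-/

open Filter Topology FormalMultilinearSeries

theorem HasFPowerSeriesOnBall.deriv_ofScalars {𝕜 : Type*} [NontriviallyNormedField 𝕜]
    [CompleteSpace 𝕜] {f : 𝕜 → 𝕜} {c : ℕ → 𝕜} {x : 𝕜} {r : ENNReal}
    (hf : HasFPowerSeriesOnBall f (ofScalars 𝕜 c) x r) :
    HasFPowerSeriesOnBall (deriv f) (ofScalars 𝕜 fun n ↦ (n + 1) * c (n + 1)) x r := by
  have hseries : ofScalars 𝕜 (fun n ↦ (n + 1) * c (n + 1)) =
      (ContinuousLinearMap.apply 𝕜 𝕜 (1 : 𝕜)).compFormalMultilinearSeries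
        (ofScalars 𝕜 c).derivSeries := by
    ext n
    simp
  rw [hseries]
  exact (ContinuousLinearMap.apply 𝕜 𝕜 (1 : 𝕜)).comp_hasFPowerSeriesOnBall hf.fderiv

theorem HasFPowerSeriesOnBall.hasSum_ofScalars {𝕜 : Type*} [NontriviallyNormedField 𝕜]
    {f : 𝕜 → 𝕜} {c : ℕ → 𝕜} {r : ENNReal} (hf : HasFPowerSeriesOnBall f (ofScalars 𝕜 c) 0 r)
    {x : 𝕜} (hx : ‖x‖ₑ < r) : HasSum (fun n ↦ c n * x ^ n) (f x) := by
  simpa [ofScalars_apply_eq, mul_comm] using hf.hasSum (y := x) (by simpa using hx)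

theorem hasSum_mul_pow_of_hasSum_shift {R : Type*} [CommRing R] [TopologicalSpace R]
    [IsTopologicalRing R] {f : ℕ → R} {x s : R} (k : ℕ) (hf : ∀ n < k, f n = 0)
    (hs : HasSum (fun n ↦ f (n + k) * x ^ n) s) :
    HasSum (fun n ↦ f n * x ^ n) (x ^ k * s) := by
  rw [← hasSum_nat_add_iff' k, Finset.sum_eq_zero fun n hn ↦ by
    rw [hf n (Finset.mem_range.mp hn), zero_mul], sub_zero]
  exact (hs.mul_left (x ^ k)).congr_fun fun n ↦ by ring

theorem ordinaryHypergeometricCoefficient_recurrence {𝕂 : Type*} [Field 𝕂] [CharZero 𝕂]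
    (a b c : 𝕂) (n : ℕ) (hc : c + n ≠ 0) :
    (n + 1) * (c + n) * ordinaryHypergeometricCoefficient a b c (n + 1) =
      (a + n) * (b + n) * ordinaryHypergeometricCoefficient a b c n := by
  simp only [ordinaryHypergeometricCoefficient, ascPochhammer_succ_eval, Nat.factorial_succ,
    Nat.cast_mul, mul_inv, Nat.cast_succ]
  have hn : (n : 𝕂) + 1 ≠ 0 := by exact_mod_cast n.succ_ne_zero
  field_simp

theorem one_le_ordinaryHypergeometricSeries_radius {𝕂 : Type*} [RCLike 𝕂] (a b c : 𝕂)
    (hc : ∀ n : ℕ, (n : 𝕂) ≠ -c) : 1 ≤ (ordinaryHypergeometricSeries 𝕂 a b c).radius := by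
  by_cases ha : ∃ n : ℕ, (n : 𝕂) = -a
  · obtain ⟨n, hn⟩ := ha
    rw [neg_eq_iff_eq_neg.mp hn.symm, ordinaryHypergeometric_radius_top_of_neg_nat₁]
    exact le_top
  by_cases hb : ∃ n : ℕ, (n : 𝕂) = -b
  · obtain ⟨n, hn⟩ := hb
    rw [neg_eq_iff_eq_neg.mp hn.symm, ordinaryHypergeometric_radius_top_of_neg_nat₂]
    exact le_top
  push Not at ha hb
  exact (ordinaryHypergeometricSeries_radius_eq_one 𝕂 a b c fun n ↦ ⟨ha n, hb n, hc n⟩).ge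

section Hypergeometric

variable {𝕂 : Type*} [RCLike 𝕂] (a b c : 𝕂)

theorem hasFPowerSeriesOnBall_ordinaryHypergeometric (hc : ∀ n : ℕ, (n : 𝕂) ≠ -c) :
    HasFPowerSeriesOnBall (₂F₁ a b c) (ordinaryHypergeometricSeries 𝕂 a b c) 0 1 :=
  have h := one_le_ordinaryHypergeometricSeries_radius a b c hc
  ((ordinaryHypergeometricSeries 𝕂 a b c).hasFPowerSeriesOnBall
    (zero_lt_one.trans_le h)).mono zero_lt_one h

theorem analyticAt_ordinaryHypergeometric (hc : ∀ n : ℕ, (n : 𝕂) ≠ -c) {x : 𝕂} (hx : ‖x‖ < 1) :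
    AnalyticAt 𝕂 (₂F₁ a b c) x :=
  (hasFPowerSeriesOnBall_ordinaryHypergeometric a b c hc).analyticAt_of_mem <| by
    rw [Metric.mem_eball, edist_zero_right, ← ofReal_norm]
    exact ENNReal.ofReal_lt_one.mpr hx

theorem ordinaryHypergeometric_ode (hc : ∀ n : ℕ, (n : 𝕂) ≠ -c) {x : 𝕂} (hx : ‖x‖ < 1) :
    x * (1 - x) * deriv (deriv (₂F₁ a b c)) x + (c - (a + b + 1) * x) * deriv (₂F₁ a b c) x
      - a * b * ₂F₁ a b c x = 0 := by
  set d := ordinaryHypergeometricCoefficient a b c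
  have hF : HasFPowerSeriesOnBall (₂F₁ a b c) (ofScalars 𝕂 d) 0 1 :=
    hasFPowerSeriesOnBall_ordinaryHypergeometric a b c hc
  have hxe : ‖x‖ₑ < 1 := by rw [← ofReal_norm]; exact ENNReal.ofReal_lt_one.mpr hx
  have sF := hF.hasSum_ofScalars hxe
  have sF' := hF.deriv_ofScalars.hasSum_ofScalars hxe
  have sF'' := hF.deriv_ofScalars.deriv_ofScalars.hasSum_ofScalars hxe
  have sxF' : HasSum (fun n ↦ n * d n * x ^ n) (x ^ 1 * deriv (₂F₁ a b c) x) :=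
    hasSum_mul_pow_of_hasSum_shift (f := fun n ↦ n * d n) 1 (by simp)
      (sF'.congr_fun fun n ↦ by push_cast; ring)
  have sxF'' : HasSum (fun n ↦ n * (n + 1) * d (n + 1) * x ^ n)
      (x ^ 1 * deriv (deriv (₂F₁ a b c)) x) :=
    hasSum_mul_pow_of_hasSum_shift (f := fun n ↦ n * (n + 1) * d (n + 1)) 1 (by simp)
      (sF''.congr_fun fun n ↦ by push_cast; ring)
  have sx2F'' : HasSum (fun n ↦ n * (n - 1) * d n * x ^ n)
      (x ^ 2 * deriv (deriv (₂F₁ a b c)) x) :=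
    hasSum_mul_pow_of_hasSum_shift (f := fun n ↦ n * (n - 1) * d n) 2
      (fun n hn ↦ by interval_cases n <;> simp)
      (sF''.congr_fun fun n ↦ by push_cast; ring)
  have hrec (n : ℕ) := ordinaryHypergeometricCoefficient_recurrence a b c n
    fun h ↦ hc n (by linear_combination h)
  have hsum := (((sxF''.sub sx2F'').add (sF'.mul_left c)).sub (sxF'.mul_left (a + b + 1))).sub
    (sF.mul_left (a * b))
  have hzero := hsum.unique (hasSum_zero.congr_fun fun n ↦ by linear_combination x ^ n * hrec n)
  linear_combination hzero

theorem ordinaryHypergeometric_sq_eq_tsum (y : 𝕂) :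
    ₂F₁ a b c (y ^ 2) = ∑' k : ℕ,
      ((ascPochhammer 𝕂 k).eval a * (ascPochhammer 𝕂 k).eval b)
        / ((ascPochhammer 𝕂 k).eval c * (k.factorial : 𝕂)) * y ^ (2 * k) := by
  rw [ordinaryHypergeometric_eq_tsum]
  refine tsum_congr fun k ↦ ?_
  rw [smul_eq_mul, pow_mul]
  ring

end Hypergeometric

section CompSq

variable {𝕜 : Type*} [NontriviallyNormedField 𝕜] {f : 𝕜 → 𝕜} {z : 𝕜}

theorem hasDerivAt_comp_sq (hf : DifferentiableAt 𝕜 f (z ^ 2)) :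
    HasDerivAt (fun y ↦ f (y ^ 2)) (2 * z * deriv f (z ^ 2)) z :=
  (hf.hasDerivAt.comp z (hasDerivAt_pow 2 z)).congr_deriv (by norm_num; ring)

theorem hasDerivAt_deriv_comp_sq (hf : ∀ᶠ y in 𝓝 (z ^ 2), DifferentiableAt 𝕜 f y)
    (hf' : DifferentiableAt 𝕜 (deriv f) (z ^ 2)) :
    HasDerivAt (deriv fun y ↦ f (y ^ 2))
      (2 * deriv f (z ^ 2) + 4 * z ^ 2 * deriv (deriv f) (z ^ 2)) z := by
  have hderiv : deriv (fun y ↦ f (y ^ 2)) =ᶠ[𝓝 z] fun y ↦ 2 * y * deriv f (y ^ 2) :=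
    ((continuous_pow 2).tendsto z).eventually hf |>.mono fun y hy ↦ (hasDerivAt_comp_sq hy).deriv
  have h := ((hasDerivAt_id' z).const_mul 2).mul (hasDerivAt_comp_sq hf')
  exact (h.congr_deriv (by ring)).congr_of_eventuallyEq hderiv

end CompSq

/-- Let `α, β, γ, ε` be real satisfying the Fuchsian condition `1 + α + β = γ + 2ε`, with
`γ > −1`.  Define `w(z) = Σ_k (α/2)_k (β/2)_k / (((1+γ)/2)_k k!) z^(2k)` (the Gauss
hypergeometric function `₂F₁(α/2, β/2; (1+γ)/2; z²)`).  Then for every `z ∈ (0,1)`, `w`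
satisfies the general Heun equation with `a = −1`, `q = 0`, `δ = ε`:
`w'' + (γ/z + ε/(z−1) + ε/(z+1)) w' + αβ z/(z(z−1)(z+1)) w = 0`. -/
theorem heun_q_zero_even_solution (α β γ ε : ℝ) (hfuchs : 1 + α + β = γ + 2 * ε)
    (hγ : -1 < γ)
    (w : ℝ → ℝ)
    (hw : ∀ z : ℝ, w z = ∑' k : ℕ,
        ((ascPochhammer ℝ k).eval (α / 2) * (ascPochhammer ℝ k).eval (β / 2))
          / ((ascPochhammer ℝ k).eval ((1 + γ) / 2) * (k.factorial : ℝ)) * z ^ (2 * k)) :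
    ∀ z ∈ Set.Ioo (0:ℝ) 1,
      DifferentiableAt ℝ w z ∧ DifferentiableAt ℝ (deriv w) z ∧
      deriv (deriv w) z + (γ / z + ε / (z - 1) + ε / (z + 1)) * deriv w z
        + α * β * z / (z * (z - 1) * (z + 1)) * w z = 0 := by
  rintro z ⟨hz0, hz1⟩
  set F : ℝ → ℝ := ₂F₁ (α / 2) (β / 2) ((1 + γ) / 2)
  have hc : ∀ n : ℕ, (n : ℝ) ≠ -((1 + γ) / 2) := fun n h ↦ by linarith [n.cast_nonneg (α := ℝ)]
  have hwF : w = fun y ↦ F (y ^ 2) :=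
    funext fun y ↦ (hw y).trans (ordinaryHypergeometric_sq_eq_tsum _ _ _ y).symm
  have hz2 : ‖z ^ 2‖ < 1 := by rw [norm_pow, Real.norm_of_nonneg hz0.le]; nlinarith
  have hF : AnalyticAt ℝ F (z ^ 2) := analyticAt_ordinaryHypergeometric _ _ _ hc hz2
  have hw' := hasDerivAt_comp_sq hF.differentiableAt
  have hw'' := hasDerivAt_deriv_comp_sq (hF.eventually_analyticAt.mono fun _ h ↦ h.differentiableAt)
    hF.deriv.differentiableAt
  have hode := ordinaryHypergeometric_ode (α / 2) (β / 2) _ hc hz2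
  subst hwF
  refine ⟨hw'.differentiableAt, hw''.differentiableAt, ?_⟩
  rw [hw''.deriv, hw'.deriv]
  have hzm1 : z - 1 ≠ 0 := by linarith
  have hzp1 : z + 1 ≠ 0 := by linarith
  field_simp
  linear_combination (-4 : ℝ) * hode - 2 * z ^ 2 * deriv F (z ^ 2) * hfuchs
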